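/- Let α ⊨ n. Every equivalence class of SRCT(α) under the equivalence relation ∼_α contains exactly one source tableau and exactly one sink tableau. Consequently, the number of source tableaux of shape α equals the number of sink tableaux of shape α, and both equal the number of equivalence classes of SRCT(α) under ∼_α. -/

import Mathlib

/-- Cell `(r,c)` (0-indexed: row `r` from the top, column `c` from the left) of the
reverse composition diagram of the composition `α`. -/
def IsCell (α : List ℕ) (r c : ℕ) : Prop := r < α.length ∧ c < α.getD r 0

instance (α : List ℕ) (r c : ℕ) : Decidable (IsCell α r c) :=
  inferInstanceAs (Decidable (r < α.length ∧ c < α.getD r 0))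

/-- A standard reverse composition tableau (SRCT) of shape `α`: a bijective filling of the
reverse composition diagram of `α` by `{1,…,α.sum}` (with the junk value `0` off the diagram)
whose rows decrease from left to right, whose first column increases from top to bottom,
and which satisfies the triple rule. -/
structure SRCT (α : List ℕ) where
  entry : ℕ → ℕ → ℕ
  zero_off : ∀ r c, ¬ IsCell α r c → entry r c = 0
  one_le : ∀ r c, IsCell α r c → 1 ≤ entry r c
  le_sum : ∀ r c, IsCell α r c → entry r c ≤ α.sum
  inj : ∀ r c r' c', IsCell α r c → IsCell α r' c' → entry r c = entry r' c' → r = r' ∧ c = c'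
  surj : ∀ m, 1 ≤ m → m ≤ α.sum → ∃ r c, IsCell α r c ∧ entry r c = m
  row_dec : ∀ r c, IsCell α r (c + 1) → entry r (c + 1) < entry r c
  col1_inc : ∀ r r', r < r' → IsCell α r 0 → IsCell α r' 0 → entry r 0 < entry r' 0
  triple : ∀ r r' c, r < r' → IsCell α r c → IsCell α r' (c + 1) →
    entry r' (c + 1) < entry r c → IsCell α r (c + 1) ∧ entry r' (c + 1) < entry r (c + 1)

/-- `i` is a descent of `T`: `i+1` appears weakly right of `i`. -/
def Descent (α : List ℕ) (T : SRCT α) (i : ℕ) : Prop :=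
  ∃ r c r' c', IsCell α r c ∧ IsCell α r' c' ∧
    T.entry r c = i ∧ T.entry r' c' = i + 1 ∧ c ≤ c'

/-- `i` and `i+1` are attacking in `T`: same column, or adjacent columns with `i+1`
strictly southeast of `i`. -/
def Attacking (α : List ℕ) (T : SRCT α) (i : ℕ) : Prop :=
  ∃ r c r' c', IsCell α r c ∧ IsCell α r' c' ∧
    T.entry r c = i ∧ T.entry r' c' = i + 1 ∧ (c' = c ∨ (c' = c + 1 ∧ r < r'))

/-- The entry function of the filling `s_i(T)` obtained from `T` by interchanging the
positions of the entries `i` and `i+1`. -/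
def swapEntry (α : List ℕ) (T : SRCT α) (i : ℕ) : ℕ → ℕ → ℕ := fun r c =>
  if T.entry r c = i then i + 1 else if T.entry r c = i + 1 then i else T.entry r c

def maxPart (α : List ℕ) : ℕ := α.foldr max 0

/-- The entries of column `c` of `T`, read from top to bottom. -/
def colList (α : List ℕ) (T : SRCT α) (c : ℕ) : List ℕ :=
  (List.range α.length).filterMap fun r => if IsCell α r c then some (T.entry r c) else none

/-- The column word of `T`: entries of each column read top to bottom, columns left to right,
viewed as a permutation of `{1,…,n}` in one-line notation. -/
def colWord (α : List ℕ) (T : SRCT α) : List ℕ :=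
  (List.range (maxPart α)).flatMap fun c => colList α T c

/-- The inversion set of a one-line word: pairs of positions `p < q` with `w_p > w_q`. -/
def invFinset (w : List ℕ) : Finset (ℕ × ℕ) :=
  (Finset.range w.length ×ˢ Finset.range w.length).filter fun pq =>
    pq.1 < pq.2 ∧ w.getD pq.2 0 < w.getD pq.1 0

/-- The number of inversions, i.e. the Coxeter length of the one-line word. -/
def invCount (w : List ℕ) : ℕ := (invFinset w).card

/-- The standardization of a word with distinct letters, with ranks `1,…,len`. -/
def stdWord (w : List ℕ) : List ℕ :=
  w.map fun x => (w.filter fun y => decide (y ≤ x)).length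

/-- The standardized column word of `T`: concatenation over columns (left to right) of the
standardizations of the column reading words (top to bottom). -/
def stWord (α : List ℕ) (T : SRCT α) : List ℕ :=
  (List.range (maxPart α)).flatMap fun c => stdWord (colList α T c)

/-- The equivalence class of `T0` under `∼_α` (equal standardized column words). -/
def stClass (α : List ℕ) (T0 : SRCT α) : Set (SRCT α) := {T | stWord α T = stWord α T0}

/-- `T` is a source tableau: for every non-descent `i ≠ n`, the entry `i+1` lies in the cell
immediately to the left of the cell containing `i`. -/
def IsSource (α : List ℕ) (T : SRCT α) : Prop :=
  ∀ i, 1 ≤ i → i < α.sum → ¬ Descent α T i →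
    ∃ r c, IsCell α r (c + 1) ∧ T.entry r c = i + 1 ∧ T.entry r (c + 1) = i

/-- `T` is a sink tableau: every descent of `T` is an attacking descent. -/
def IsSink (α : List ℕ) (T : SRCT α) : Prop := ∀ i, Descent α T i → Attacking α T i

/-!
Interchanging the entries `i` and `i + 1` of an SRCT when they lie in different columns keeps the
standardized column word. If `i + 1` lies weakly right of `i` without attacking it, or strictly
left of it but not immediately left in the same row, the interchange is again an SRCT and strictly
lowers `∑ column · entry`, respectively `∑ column · (n - entry)`; so every class contains a sink
and a source.

Equivalent tableaux order the entries of each column alike. If `T'` is a sink, an inequality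
`T' p < T' q` with `p` weakly left of `q` holds in every tableau of its class: walking through the
values in between, attacking descents of `T'` carry it one column to the right by the triple rule.
For a source the same holds with `p` weakly right of `q`, adjacent non-descents carrying the
inequality one column to the left by the row condition. Two sinks (or sources) of one class thus
order all cells alike, and a standard filling is determined by that order.
-/

open Set

theorem Nat.exists_le_lt_and_not_succ {S : ℕ → Prop} {a b : ℕ} (hab : a ≤ b) (ha : S a)
    (hb : ¬S b) : ∃ u, a ≤ u ∧ u < b ∧ S u ∧ ¬S (u + 1) := by
  induction b, hab using Nat.le_induction with
  | base => exact absurd ha hb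
  | succ b hab ih =>
    by_cases hSb : S b
    · exact ⟨b, hab, b.lt_succ_self, hSb, hb⟩
    · obtain ⟨u, hau, hub, hu, hu1⟩ := ih hSb
      exact ⟨u, hau, by omega, hu, hu1⟩

theorem Nat.add_le_of_strictMonoOn_Icc {f : ℕ → ℕ} {n : ℕ} (hf : StrictMonoOn f (Icc 1 n))
    {v : ℕ} (hv : 1 ≤ v) : ∀ k, v + k ≤ n → f v + k ≤ f (v + k)
  | 0, _ => le_rfl
  | k + 1, hk => by
    have ih := Nat.add_le_of_strictMonoOn_Icc hf hv k (by omega)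
    have := hf ⟨by omega, by omega⟩ ⟨by omega, hk⟩ (show v + k < v + (k + 1) by omega)
    omega

theorem Nat.eq_self_of_strictMonoOn_Icc {f : ℕ → ℕ} {n : ℕ} (hf : StrictMonoOn f (Icc 1 n))
    (hmaps : MapsTo f (Icc 1 n) (Icc 1 n)) {v : ℕ} (hv : v ∈ Icc 1 n) : f v = v := by
  obtain ⟨hv1, hvn⟩ := hv
  have hlow := Nat.add_le_of_strictMonoOn_Icc hf le_rfl (v - 1) (by omega)
  have hup := Nat.add_le_of_strictMonoOn_Icc hf hv1 (n - v) (by omega)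
  have h1 := (hmaps ⟨le_rfl, by omega⟩ : f 1 ∈ Icc 1 n).1
  have hn := (hmaps ⟨by omega, le_rfl⟩ : f n ∈ Icc 1 n).2
  rw [show 1 + (v - 1) = v by omega] at hlow
  rw [show v + (n - v) = n by omega] at hup
  omega

theorem exists_mem_of_descent {β : Type*} {s : Set β} {P : β → Prop} (μ : β → ℕ)
    (hs : s.Nonempty) (h : ∀ b ∈ s, ¬P b → ∃ b' ∈ s, μ b' < μ b) : ∃ b ∈ s, P b := by
  obtain ⟨b, hb, hmin⟩ := (measure μ).wf.has_min s hs
  by_contra! hP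
  obtain ⟨b', hb', hlt⟩ := h b hb (hP b hb)
  exact hmin b' hb' hlt

theorem ncard_setOf_eq_ncard_range {β γ : Type*} {f : β → γ} {P : β → Prop}
    (h : ∀ b, ∃! b', f b' = f b ∧ P b') : {b | P b}.ncard = (range f).ncard := by
  have himage : f '' {b | P b} = range f := by
    refine (image_subset_range _ _).antisymm ?_
    rintro _ ⟨b, rfl⟩
    obtain ⟨b', ⟨hb', hP⟩, -⟩ := h b
    exact ⟨b', hP, hb'⟩
  rw [← himage, InjOn.ncard_image]
  intro b₁ hb₁ b₂ hb₂ he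
  exact (h b₁).unique ⟨rfl, hb₁⟩ ⟨he.symm, hb₂⟩

theorem List.eq_of_flatMap_eq {β γ : Type*} {L : List β} {f g : β → List γ}
    (hlen : ∀ b ∈ L, (f b).length = (g b).length) (h : L.flatMap f = L.flatMap g) :
    ∀ b ∈ L, f b = g b := by
  induction L with
  | nil => simp
  | cons a t ih =>
    rw [List.flatMap_cons, List.flatMap_cons] at h
    obtain ⟨ha, ht⟩ := List.append_inj h (hlen a List.mem_cons_self)
    rintro b (_ | ⟨_, hb⟩)
    · exact ha
    · exact ih (fun x hx => hlen x (List.mem_cons_of_mem _ hx)) ht b hb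

def rank (w : List ℕ) (x : ℕ) : ℕ := (w.filter fun y => decide (y ≤ x)).length

theorem filter_le_sublist_filter_le (w : List ℕ) {x y : ℕ} (hxy : x ≤ y) :
    (w.filter fun z => decide (z ≤ x)).Sublist (w.filter fun z => decide (z ≤ y)) :=
  List.monotone_filter_right w fun z hz => by simp only [decide_eq_true_eq] at *; omega

theorem rank_lt_rank_iff {w : List ℕ} {x y : ℕ} (hy : y ∈ w) : rank w x < rank w y ↔ x < y := by
  refine ⟨fun h => lt_of_not_ge fun hyx =>
    (filter_le_sublist_filter_le w hyx).length_le.not_gt h, fun hxy => ?_⟩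
  have hsub := filter_le_sublist_filter_le w hxy.le
  refine lt_of_le_of_ne hsub.length_le fun hlen => ?_
  have hmem : y ∈ w.filter fun z => decide (z ≤ y) := List.mem_filter.2 ⟨hy, by simp⟩
  rw [← hsub.eq_of_length hlen, List.mem_filter] at hmem
  simp only [decide_eq_true_eq] at hmem
  omega

theorem stdWord_map_of_le_iff {w : List ℕ} {f : ℕ → ℕ}
    (hf : ∀ x ∈ w, ∀ y ∈ w, f y ≤ f x ↔ y ≤ x) : stdWord (w.map f) = stdWord w := by
  simp only [stdWord, List.map_map, List.filter_map, List.length_map]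
  refine List.map_congr_left fun x hx => ?_
  simp only [Function.comp_apply]
  congr 1
  exact List.filter_congr fun y hy => by simp [hf x hx y hy]

theorem lt_iff_lt_of_stdWord_map_eq {β : Type*} {L : List β} {f g : β → ℕ}
    (h : stdWord (L.map f) = stdWord (L.map g)) {a b : β} (ha : a ∈ L) (hb : b ∈ L) :
    f a < f b ↔ g a < g b := by
  have hrk : ∀ k : β → ℕ, stdWord (L.map k) = L.map fun x => rank (L.map k) (k x) := fun k => by
    simp only [stdWord, List.map_map]
    rfl
  rw [hrk, hrk, List.map_eq_map_iff] at h
  have hfb : f b ∈ L.map f := List.mem_map_of_mem hb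
  have hgb : g b ∈ L.map g := List.mem_map_of_mem hb
  rw [← rank_lt_rank_iff hfb, ← rank_lt_rank_iff hgb, h a ha, h b hb]

theorem IsCell.of_le {α : List ℕ} {r c c' : ℕ} (h : IsCell α r c) (hc : c' ≤ c) :
    IsCell α r c' :=
  ⟨h.1, lt_of_le_of_lt hc h.2⟩

theorem IsCell.col_lt_maxPart {α : List ℕ} {r c : ℕ} (h : IsCell α r c) : c < maxPart α := by
  have hmem : α.getD r 0 ∈ α := by
    rw [List.getD_eq_getElem _ _ h.1]; exact List.getElem_mem h.1
  exact lt_of_lt_of_le h.2 (List.le_max_of_le' 0 hmem le_rfl)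

namespace SRCT

variable {α : List ℕ}

@[ext]
theorem ext {T T' : SRCT α} (h : T.entry = T'.entry) : T = T' := by
  cases T; cases T'; simpa using h

theorem entry_lt_entry_of_lt (T : SRCT α) {r c c' : ℕ} (h : IsCell α r c') (hcc : c < c') :
    T.entry r c' < T.entry r c := by
  induction c', hcc using Nat.le_induction with
  | base => exact T.row_dec r c h
  | succ k hk ih => exact (T.row_dec r k h).trans (ih (h.of_le k.le_succ))

/-- The cell containing `v`; junk unless `1 ≤ v ≤ α.sum`. -/
noncomputable def pos (T : SRCT α) (v : ℕ) : ℕ × ℕ :=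
  Classical.epsilon fun p => IsCell α p.1 p.2 ∧ T.entry p.1 p.2 = v

variable (T : SRCT α) {v r c : ℕ}

theorem eq_of_entry_eq {p q : ℕ} (hc : IsCell α r c) (h : T.entry p q = T.entry r c) :
    p = r ∧ q = c := by
  by_cases hpq : IsCell α p q
  · exact T.inj _ _ _ _ hpq hc h
  · have := T.one_le r c hc
    rw [T.zero_off p q hpq] at h
    omega

theorem pos_spec (h1 : 1 ≤ v) (h2 : v ≤ α.sum) :
    IsCell α (T.pos v).1 (T.pos v).2 ∧ T.entry (T.pos v).1 (T.pos v).2 = v :=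
  Classical.epsilon_spec (p := fun p : ℕ × ℕ => IsCell α p.1 p.2 ∧ T.entry p.1 p.2 = v)
    (let ⟨r, c, h⟩ := T.surj v h1 h2; ⟨(r, c), h⟩)

theorem isCell_pos (h1 : 1 ≤ v) (h2 : v ≤ α.sum) : IsCell α (T.pos v).1 (T.pos v).2 :=
  (T.pos_spec h1 h2).1

theorem entry_pos (h1 : 1 ≤ v) (h2 : v ≤ α.sum) : T.entry (T.pos v).1 (T.pos v).2 = v :=
  (T.pos_spec h1 h2).2

theorem pos_entry (hc : IsCell α r c) : T.pos (T.entry r c) = (r, c) := by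
  have hpos := T.pos_spec (T.one_le r c hc) (T.le_sum r c hc)
  obtain ⟨h1, h2⟩ := T.inj _ _ _ _ hpos.1 hc hpos.2
  exact Prod.ext h1 h2

theorem descent_iff {i : ℕ} (hi : 1 ≤ i) (hin : i < α.sum) :
    Descent α T i ↔ (T.pos i).2 ≤ (T.pos (i + 1)).2 := by
  constructor
  · rintro ⟨r, c, r', c', hx, hy, rfl, hey, hcc⟩
    rwa [← hey, T.pos_entry hx, T.pos_entry hy]
  · exact fun h => ⟨_, _, _, _, T.isCell_pos hi hin.le, T.isCell_pos (by omega) hin,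
      T.entry_pos hi hin.le, T.entry_pos (by omega) hin, h⟩

theorem pos_of_attacking {i : ℕ} (h : Attacking α T i) :
    (T.pos (i + 1)).2 = (T.pos i).2 ∨
      ((T.pos (i + 1)).2 = (T.pos i).2 + 1 ∧ (T.pos i).1 < (T.pos (i + 1)).1) := by
  obtain ⟨r, c, r', c', hx, hy, rfl, hey, h⟩ := h
  rwa [← hey, T.pos_entry hx, T.pos_entry hy]

end SRCT

section Columns

variable {α : List ℕ}

def rowsIn (α : List ℕ) (c : ℕ) : List ℕ :=
  (List.range α.length).filter fun r => decide (IsCell α r c)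

theorem mem_rowsIn {r c : ℕ} (h : IsCell α r c) : r ∈ rowsIn α c :=
  List.mem_filter.2 ⟨List.mem_range.2 h.1, decide_eq_true h⟩

theorem colList_eq_map (T : SRCT α) (c : ℕ) :
    colList α T c = (rowsIn α c).map fun r => T.entry r c := by
  unfold colList rowsIn
  induction List.range α.length with
  | nil => rfl
  | cons a l ih => by_cases h : IsCell α a c <;> simp [h, ih]

theorem mem_colList {T : SRCT α} {c v : ℕ} :
    v ∈ colList α T c ↔ ∃ r, IsCell α r c ∧ T.entry r c = v := by
  simp only [colList_eq_map, List.mem_map, rowsIn, List.mem_filter, List.mem_range,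
    decide_eq_true_eq]
  exact ⟨fun ⟨r, ⟨_, hc⟩, he⟩ => ⟨r, hc, he⟩, fun ⟨r, hc, he⟩ => ⟨r, ⟨hc.1, hc⟩, he⟩⟩

theorem stdWord_colList_eq {T T' : SRCT α} (h : stWord α T = stWord α T') {c : ℕ}
    (hc : c < maxPart α) : stdWord (colList α T c) = stdWord (colList α T' c) :=
  List.eq_of_flatMap_eq (fun b _ => by simp [stdWord, colList_eq_map]) h c (List.mem_range.2 hc)

theorem entry_lt_entry_iff_of_stWord_eq {T T' : SRCT α} (h : stWord α T = stWord α T')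
    {r s c : ℕ} (hr : IsCell α r c) (hs : IsCell α s c) :
    T.entry r c < T.entry s c ↔ T'.entry r c < T'.entry s c := by
  have hcol := stdWord_colList_eq h hr.col_lt_maxPart
  rw [colList_eq_map, colList_eq_map] at hcol
  exact lt_iff_lt_of_stdWord_map_eq hcol (mem_rowsIn hr) (mem_rowsIn hs)

theorem stWord_eq_of_entry_eq_comp {T T' : SRCT α} {f : ℕ → ℕ}
    (hT' : ∀ r c, T'.entry r c = f (T.entry r c))
    (hf : ∀ c, ∀ x ∈ colList α T c, ∀ y ∈ colList α T c, f y ≤ f x ↔ y ≤ x) :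
    stWord α T' = stWord α T := by
  refine List.flatMap_congr fun c _ => ?_
  have hmap : colList α T' c = (colList α T c).map f := by
    simp only [colList_eq_map, List.map_map, Function.comp_def, hT']
  rw [hmap, stdWord_map_of_le_iff (hf c)]

end Columns

theorem swap_succ_lt_swap_succ_iff {i v w : ℕ} (h : ¬(v = i ∧ w = i + 1))
    (h' : ¬(v = i + 1 ∧ w = i)) : Equiv.swap i (i + 1) v < Equiv.swap i (i + 1) w ↔ v < w := by
  simp only [Equiv.swap_apply_def]
  split_ifs <;> omega

theorem swapEntry_eq {α : List ℕ} (T : SRCT α) (i r c : ℕ) :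
    swapEntry α T i r c = Equiv.swap i (i + 1) (T.entry r c) :=
  (Equiv.swap_apply_def _ _ _).symm

/-- Entries outside the diagram are `0` and contribute the constant `∑ c * f 0`. -/
def colWeight (α : List ℕ) (f : ℕ → ℕ) (T : SRCT α) : ℕ :=
  ∑ p ∈ Finset.range α.length ×ˢ Finset.range (maxPart α), p.2 * f (T.entry p.1 p.2)

section Swap

variable {α : List ℕ} {T : SRCT α} {i r c r' c' : ℕ}
  (hx : IsCell α r c) (hy : IsCell α r' c') (hex : T.entry r c = i) (hey : T.entry r' c' = i + 1)
include hx hy hex hey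

theorem swap_entry_lt_swap_entry_iff ⦃p q p' q' : ℕ⦄ (h : ¬(p = r ∧ q = c ∧ p' = r' ∧ q' = c'))
    (h' : ¬(p = r' ∧ q = c' ∧ p' = r ∧ q' = c)) :
    Equiv.swap i (i + 1) (T.entry p q) < Equiv.swap i (i + 1) (T.entry p' q') ↔
      T.entry p q < T.entry p' q' := by
  refine swap_succ_lt_swap_succ_iff (fun ⟨h₁, h₂⟩ => h ?_) (fun ⟨h₁, h₂⟩ => h' ?_)
  · have := T.eq_of_entry_eq hx (h₁.trans hex.symm)
    have := T.eq_of_entry_eq hy (h₂.trans hey.symm)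
    omega
  · have := T.eq_of_entry_eq hy (h₁.trans hey.symm)
    have := T.eq_of_entry_eq hx (h₂.trans hex.symm)
    omega

/-- Only comparisons between the cells of `i` and `i + 1` change, and the hypotheses keep this
pair out of every defining condition. -/
theorem exists_entry_eq_swapEntry (hrow : r ≠ r') (hcol : c ≠ c')
    (hatt : ¬(c' = c + 1 ∧ r < r')) : ∃ T' : SRCT α, T'.entry = swapEntry α T i := by
  set σ := Equiv.swap i (i + 1)
  have hi : 1 ≤ i := hex ▸ T.one_le r c hx
  have hin : i + 1 ≤ α.sum := hey ▸ T.le_sum r' c' hy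
  have hσ : ∀ v, 1 ≤ v → v ≤ α.sum → 1 ≤ σ v ∧ σ v ≤ α.sum := by
    intro v
    simp only [σ, Equiv.swap_apply_def]
    split_ifs <;> omega
  have hlt := swap_entry_lt_swap_entry_iff hx hy hex hey
  refine ⟨⟨fun p q => σ (T.entry p q), ?_, ?_, ?_, ?_, ?_, ?_, ?_, ?_⟩,
    funext₂ fun p q => (swapEntry_eq T i p q).symm⟩
  · intro p q h
    rw [T.zero_off p q h]
    exact Equiv.swap_apply_of_ne_of_ne (by omega) (by omega)
  · exact fun p q h => (hσ _ (T.one_le p q h) (T.le_sum p q h)).1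
  · exact fun p q h => (hσ _ (T.one_le p q h) (T.le_sum p q h)).2
  · exact fun p q p' q' h h' he => T.inj p q p' q' h h' (σ.injective he)
  · intro m h₁ h₂
    obtain ⟨p, q, hpq, he⟩ := T.surj (σ m) (hσ m h₁ h₂).1 (hσ m h₁ h₂).2
    exact ⟨p, q, hpq, by simp only [he, σ, Equiv.swap_apply_self]⟩
  · exact fun p q h => (hlt (by omega) (by omega)).2 (T.row_dec p q h)
  · exact fun p p' hpp h h' => (hlt (by omega) (by omega)).2 (T.col1_inc p p' hpp h h')
  · intro p p' q hpp hA hB hBA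
    replace hBA : T.entry p' (q + 1) < T.entry p q := by
      by_cases hBx : p' = r ∧ q + 1 = c ∧ p = r' ∧ q = c'
      · obtain ⟨rfl, rfl, rfl, rfl⟩ := hBx
        simp [σ, hex, hey] at hBA
      · exact (hlt hBx (by omega)).1 hBA
    obtain ⟨hC, hBC⟩ := T.triple p p' q hpp hA hB hBA
    exact ⟨hC, (hlt (by omega) (by omega)).2 hBC⟩

theorem stWord_swap {T' : SRCT α} (hcol : c ≠ c') (hT' : T'.entry = swapEntry α T i) :
    stWord α T' = stWord α T := by
  refine stWord_eq_of_entry_eq_comp (fun p q => by rw [hT', swapEntry_eq]) ?_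
  intro q v hv w hw
  obtain ⟨p, -, rfl⟩ := mem_colList.1 hv
  obtain ⟨p', -, rfl⟩ := mem_colList.1 hw
  simpa only [not_lt] using not_congr (swap_entry_lt_swap_entry_iff hx hy hex hey
    (p := p) (q := q) (p' := p') (q' := q) (by omega) (by omega))

theorem colWeight_swap {T' : SRCT α} (hT' : T'.entry = swapEntry α T i) (f : ℕ → ℕ) :
    colWeight α f T' + c * f i + c' * f (i + 1) =
      colWeight α f T + c * f (i + 1) + c' * f i := by
  have hxy : ((r, c) : ℕ × ℕ) ≠ (r', c') := by
    rintro ⟨⟩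
    omega
  have hpt : ∀ p : ℕ × ℕ, p.2 * f (T'.entry p.1 p.2) + (if p = (r, c) then p.2 * f i else 0) +
      (if p = (r', c') then p.2 * f (i + 1) else 0) =
      p.2 * f (T.entry p.1 p.2) + (if p = (r, c) then p.2 * f (i + 1) else 0) +
      (if p = (r', c') then p.2 * f i else 0) := by
    rintro ⟨p, q⟩
    rw [hT', swapEntry_eq]
    by_cases hpx : (p, q) = (r, c)
    · obtain ⟨rfl, rfl⟩ := Prod.ext_iff.1 hpx
      simp [hxy, hex, add_comm]
    by_cases hpy : (p, q) = (r', c')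
    · obtain ⟨rfl, rfl⟩ := Prod.ext_iff.1 hpy
      simp [hxy.symm, hey, add_comm]
    rw [Equiv.swap_apply_of_ne_of_ne
      (fun h => hpx (Prod.ext_iff.2 (T.eq_of_entry_eq hx (h.trans hex.symm))))
      (fun h => hpy (Prod.ext_iff.2 (T.eq_of_entry_eq hy (h.trans hey.symm))))]
    simp [hpx, hpy]
  have hmem : ∀ {p q}, IsCell α p q →
      (p, q) ∈ Finset.range α.length ×ˢ Finset.range (maxPart α) :=
    fun h => Finset.mem_product.2 ⟨Finset.mem_range.2 h.1, Finset.mem_range.2 h.col_lt_maxPart⟩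
  have hsum := Finset.sum_congr rfl
    fun p (_ : p ∈ Finset.range α.length ×ˢ Finset.range (maxPart α)) => hpt p
  simp only [Finset.sum_add_distrib, Finset.sum_ite_eq', hmem hx, hmem hy, if_true] at hsum
  exact hsum

end Swap

section Existence

variable {α : List ℕ}

theorem exists_colWeight_lt_of_not_isSink {T : SRCT α} (hT : ¬IsSink α T) :
    ∃ T', stWord α T' = stWord α T ∧ colWeight α id T' < colWeight α id T := by
  simp only [IsSink, not_forall] at hT
  obtain ⟨i, ⟨r, c, r', c', hx, hy, hex, hey, hcc⟩, hna⟩ := hT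
  have hcol : c ≠ c' := fun h => hna ⟨r, c, r', c', hx, hy, hex, hey, Or.inl h.symm⟩
  have hrow : r ≠ r' := by
    rintro rfl
    have := T.entry_lt_entry_of_lt hy (lt_of_le_of_ne hcc hcol)
    omega
  obtain ⟨T', hT'⟩ := exists_entry_eq_swapEntry hx hy hex hey hrow hcol
    fun h => hna ⟨r, c, r', c', hx, hy, hex, hey, Or.inr h⟩
  refine ⟨T', stWord_swap hx hy hex hey hcol hT', ?_⟩
  have := colWeight_swap hx hy hex hey hT' id
  simp only [id] at this
  nlinarith [lt_of_le_of_ne hcc hcol]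

theorem exists_colWeight_lt_of_not_isSource {T : SRCT α} (hT : ¬IsSource α T) :
    ∃ T', stWord α T' = stWord α T ∧
      colWeight α (α.sum - ·) T' < colWeight α (α.sum - ·) T := by
  simp only [IsSource, not_forall] at hT
  obtain ⟨i, hi, hin, hnd, hadj⟩ := hT
  obtain ⟨r, c, hx, hex⟩ := T.surj i hi hin.le
  obtain ⟨r', c', hy, hey⟩ := T.surj (i + 1) (by omega) hin
  have hcc : c' < c := lt_of_not_ge fun h => hnd ⟨r, c, r', c', hx, hy, hex, hey, h⟩
  have hrow : r ≠ r' := by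
    rintro rfl
    rcases (show c' + 1 ≤ c by omega).eq_or_lt with rfl | hlt
    · exact hadj ⟨r, c', hx, hey, hex⟩
    · have := T.entry_lt_entry_of_lt hx hlt
      have := T.row_dec r c' (hx.of_le hlt.le)
      omega
  obtain ⟨T', hT'⟩ := exists_entry_eq_swapEntry hx hy hex hey hrow hcc.ne' (by omega)
  refine ⟨T', stWord_swap hx hy hex hey hcc.ne' hT', ?_⟩
  have := colWeight_swap hx hy hex hey hT' (α.sum - ·)
  rw [show α.sum - i = α.sum - (i + 1) + 1 by omega] at this
  nlinarith

theorem exists_isSink (T : SRCT α) : ∃ T' ∈ stClass α T, IsSink α T' :=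
  exists_mem_of_descent (colWeight α id) ⟨T, rfl⟩ fun _ h₁ hT₁ =>
    let ⟨T₂, h₂, hlt⟩ := exists_colWeight_lt_of_not_isSink hT₁
    ⟨T₂, h₂.trans h₁, hlt⟩

theorem exists_isSource (T : SRCT α) : ∃ T' ∈ stClass α T, IsSource α T' :=
  exists_mem_of_descent (colWeight α (α.sum - ·)) ⟨T, rfl⟩ fun _ h₁ hT₁ =>
    let ⟨T₂, h₂, hlt⟩ := exists_colWeight_lt_of_not_isSource hT₁
    ⟨T₂, h₂.trans h₁, hlt⟩

end Existence

/-- Pick `u ∈ [v, w)` with `col u ≤ col v < col (u + 1)`: the step `u → u + 1` climbs exactly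
one level, so `col u = col v`, and induction applies to `u + 1 < w`. -/
theorem lt_of_col_le {n : ℕ} {col : ℕ → ℤ} {τ : ℕ → ℕ}
    (same : ∀ v w, 1 ≤ v → v < w → w ≤ n → col v = col w → τ v < τ w)
    (step : ∀ u, 1 ≤ u → u + 1 ≤ n → col u < col (u + 1) →
      col (u + 1) = col u + 1 ∧ τ u < τ (u + 1))
    {v w : ℕ} (hv : 1 ≤ v) (hvw : v < w) (hw : w ≤ n) (hcol : col v ≤ col w) : τ v < τ w := by
  induction hd : w - v using Nat.strong_induction_on generalizing v with
  | _ d ih =>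
    rcases hcol.eq_or_lt with heq | hlt
    · exact same v w hv hvw hw heq
    obtain ⟨u, hvu, huw, hu, hu1⟩ :=
      Nat.exists_le_lt_and_not_succ (S := fun x => col x ≤ col v) hvw.le le_rfl hlt.not_ge
    obtain ⟨hsucc, hτu⟩ := step u (by omega) (by omega) (by omega)
    have hvu' : τ v ≤ τ u := by
      rcases hvu.eq_or_lt with rfl | h
      · exact le_rfl
      · exact (same v u hv h (by omega) (by omega)).le
    have huw' : τ (u + 1) ≤ τ w := by
      rcases (show u + 1 ≤ w by omega).eq_or_lt with h | h
      · rw [h]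
      · exact (ih (w - (u + 1)) (by omega) (by omega) h (by omega) rfl).le
    omega

section Order

variable {α : List ℕ} {T T' : SRCT α}

theorem entry_lt_entry_of_stWord_eq_of_southeast (h : stWord α T = stWord α T')
    {p q p' q' : ℕ} (hA : IsCell α p q) (hB : IsCell α p' q') (hq : q' = q + 1) (hpp : p < p')
    (hlt : T'.entry p q < T'.entry p' q') : T.entry p q < T.entry p' q' := by
  subst hq
  -- otherwise the triple rule gives `T (p', q+1) < T (p, q+1)`, whereas
  -- `T' (p, q+1) < T' (p, q) < T' (p', q+1)` and the cells `(p, q+1)`, `(p', q+1)` share a column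
  by_contra! hge
  have hne : T.entry p' (q + 1) ≠ T.entry p q := fun he => by
    have := (T.eq_of_entry_eq hA he).1
    omega
  obtain ⟨hC, hBC⟩ := T.triple p p' q hpp hA hB (lt_of_le_of_ne hge hne)
  have hCB := (entry_lt_entry_iff_of_stWord_eq h hC hB).2 (by have := T'.row_dec p q hC; omega)
  omega

theorem entry_pos_lt_of_col_eq (h : stWord α T = stWord α T') {v w : ℕ} (hv : 1 ≤ v)
    (hvw : v < w) (hw : w ≤ α.sum) (hcol : (T'.pos v).2 = (T'.pos w).2) :
    T.entry (T'.pos v).1 (T'.pos v).2 < T.entry (T'.pos w).1 (T'.pos w).2 := by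
  obtain ⟨hcv, hev⟩ := T'.pos_spec hv (by omega)
  obtain ⟨hcw, hew⟩ := T'.pos_spec (by omega) hw
  rw [hcol] at hcv hev ⊢
  exact (entry_lt_entry_iff_of_stWord_eq h hcv hcw).2 (by rw [hev, hew]; exact hvw)

theorem entry_lt_entry_of_isSink (h : stWord α T = stWord α T') (hT' : IsSink α T')
    {r c r' c' : ℕ} (hp : IsCell α r c) (hq : IsCell α r' c') (hc : c ≤ c')
    (hlt : T'.entry r c < T'.entry r' c') : T.entry r c < T.entry r' c' := by
  have key := lt_of_col_le (n := α.sum) (col := fun v => ((T'.pos v).2 : ℤ))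
    (τ := fun v => T.entry (T'.pos v).1 (T'.pos v).2)
    (fun v w hv hvw hw hcol => entry_pos_lt_of_col_eq h hv hvw hw (by omega)) ?_
    (T'.one_le r c hp) hlt (T'.le_sum r' c' hq) (by simp [T'.pos_entry hp, T'.pos_entry hq, hc])
  · simpa [T'.pos_entry hp, T'.pos_entry hq] using key
  intro u hu hun hlt
  have hd : Descent α T' u := (T'.descent_iff hu (by omega)).2 (by omega)
  rcases T'.pos_of_attacking (hT' u hd) with heq | ⟨hsucc, hrow⟩
  · omega
  refine ⟨by omega, entry_lt_entry_of_stWord_eq_of_southeast h (T'.isCell_pos hu (by omega))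
    (T'.isCell_pos (by omega) hun) hsucc hrow ?_⟩
  rw [T'.entry_pos hu (by omega), T'.entry_pos (by omega) hun]
  omega

theorem entry_lt_entry_of_isSource (h : stWord α T = stWord α T') (hT' : IsSource α T')
    {r c r' c' : ℕ} (hp : IsCell α r c) (hq : IsCell α r' c') (hc : c' ≤ c)
    (hlt : T'.entry r c < T'.entry r' c') : T.entry r c < T.entry r' c' := by
  have key := lt_of_col_le (n := α.sum) (col := fun v => -((T'.pos v).2 : ℤ))
    (τ := fun v => T.entry (T'.pos v).1 (T'.pos v).2)
    (fun v w hv hvw hw hcol => entry_pos_lt_of_col_eq h hv hvw hw (by omega)) ?_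
    (T'.one_le r c hp) hlt (T'.le_sum r' c' hq) (by simp [T'.pos_entry hp, T'.pos_entry hq, hc])
  · simpa [T'.pos_entry hp, T'.pos_entry hq] using key
  intro u hu hun hlt
  have hnd : ¬Descent α T' u := by
    rw [T'.descent_iff hu (by omega)]
    omega
  obtain ⟨r, c, hc, he₁, he₀⟩ := hT' u hu (by omega) hnd
  rw [← he₁, T'.pos_entry (hc.of_le c.le_succ), ← he₀, T'.pos_entry hc]
  exact ⟨by push_cast; ring, T.row_dec r c hc⟩

/-- `v ↦ T (T'.pos v)` is a strictly increasing self-map of `{1, …, n}`, hence the identity. -/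
theorem eq_of_entry_lt_entry_imp
    (h : ∀ {r c r' c'}, IsCell α r c → IsCell α r' c' →
      T'.entry r c < T'.entry r' c' → T.entry r c < T.entry r' c') : T = T' := by
  have hmono : StrictMonoOn (fun v => T.entry (T'.pos v).1 (T'.pos v).2) (Icc 1 α.sum) :=
    fun v hv w hw hvw => h (T'.isCell_pos hv.1 hv.2) (T'.isCell_pos hw.1 hw.2)
      (by rwa [T'.entry_pos hv.1 hv.2, T'.entry_pos hw.1 hw.2])
  have hmaps : MapsTo (fun v => T.entry (T'.pos v).1 (T'.pos v).2) (Icc 1 α.sum) (Icc 1 α.sum) :=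
    fun v hv => ⟨T.one_le _ _ (T'.isCell_pos hv.1 hv.2), T.le_sum _ _ (T'.isCell_pos hv.1 hv.2)⟩
  ext r c
  by_cases hc : IsCell α r c
  · simpa [T'.pos_entry hc] using
      Nat.eq_self_of_strictMonoOn_Icc hmono hmaps ⟨T'.one_le r c hc, T'.le_sum r c hc⟩
  · rw [T.zero_off r c hc, T'.zero_off r c hc]

theorem eq_of_entry_lt_entry_imp_of_total {R : ℕ → ℕ → Prop} (hR : ∀ c c', R c c' ∨ R c' c)
    (h : ∀ {r c r' c'}, IsCell α r c → IsCell α r' c' → R c c' →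
      T'.entry r c < T'.entry r' c' → T.entry r c < T.entry r' c')
    (h' : ∀ {r c r' c'}, IsCell α r c → IsCell α r' c' → R c c' →
      T.entry r c < T.entry r' c' → T'.entry r c < T'.entry r' c') : T = T' := by
  refine eq_of_entry_lt_entry_imp fun {r c r' c'} hp hq hlt => ?_
  rcases hR c c' with hcc | hcc
  · exact h hp hq hcc hlt
  by_contra! hge
  have hne : T.entry r' c' ≠ T.entry r c := fun he => by
    obtain ⟨rfl, rfl⟩ := T.eq_of_entry_eq hp he
    omega
  have := h' hq hp hcc (lt_of_le_of_ne hge hne)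
  omega

theorem isSink_unique (h : stWord α T = stWord α T') (hT : IsSink α T) (hT' : IsSink α T') :
    T = T' :=
  eq_of_entry_lt_entry_imp_of_total le_total (entry_lt_entry_of_isSink h hT')
    (entry_lt_entry_of_isSink h.symm hT)

theorem isSource_unique (h : stWord α T = stWord α T') (hT : IsSource α T)
    (hT' : IsSource α T') : T = T' :=
  eq_of_entry_lt_entry_imp_of_total (R := fun c c' => c' ≤ c) (fun c c' => le_total c' c)
    (entry_lt_entry_of_isSource h hT') (entry_lt_entry_of_isSource h.symm hT)

end Order

theorem unique_source_and_sink_general (α : List ℕ) :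
    (∀ T : SRCT α, ∃! Ts : SRCT α, Ts ∈ stClass α T ∧ IsSource α Ts) ∧
    (∀ T : SRCT α, ∃! Tk : SRCT α, Tk ∈ stClass α T ∧ IsSink α Tk) ∧
    Set.ncard {T : SRCT α | IsSource α T} = Set.ncard (Set.range (stWord α)) ∧
    Set.ncard {T : SRCT α | IsSink α T} = Set.ncard (Set.range (stWord α)) := by
  have hsource : ∀ T : SRCT α, ∃! Ts : SRCT α, Ts ∈ stClass α T ∧ IsSource α Ts := fun T =>
    let ⟨Ts, hTs, hs⟩ := exists_isSource T
    ⟨Ts, ⟨hTs, hs⟩, fun _ ⟨h, hs'⟩ => isSource_unique (h.trans hTs.symm) hs' hs⟩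
  have hsink : ∀ T : SRCT α, ∃! Tk : SRCT α, Tk ∈ stClass α T ∧ IsSink α Tk := fun T =>
    let ⟨Tk, hTk, hk⟩ := exists_isSink T
    ⟨Tk, ⟨hTk, hk⟩, fun _ ⟨h, hk'⟩ => isSink_unique (h.trans hTk.symm) hk' hk⟩
  exact ⟨hsource, hsink, ncard_setOf_eq_ncard_range hsource, ncard_setOf_eq_ncard_range hsink⟩

/-- Every `∼_α`-equivalence class contains exactly one source tableau and exactly one sink
tableau; hence sources, sinks and equivalence classes are equinumerous. -/
theorem unique_source_and_sink (n : ℕ) (α : List ℕ) (hpos : ∀ a ∈ α, 0 < a)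
    (hsum : α.sum = n) :
    (∀ T : SRCT α, ∃! Ts : SRCT α, Ts ∈ stClass α T ∧ IsSource α Ts) ∧
    (∀ T : SRCT α, ∃! Tk : SRCT α, Tk ∈ stClass α T ∧ IsSink α Tk) ∧
    Set.ncard {T : SRCT α | IsSource α T} = Set.ncard (Set.range (stWord α)) ∧
    Set.ncard {T : SRCT α | IsSink α T} = Set.ncard (Set.range (stWord α)) :=
  unique_source_and_sink_general α
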